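/- Any vertex cover of a connected graph G is a distance-edge-monitoring set of G; consequently dem(G) ≤ β(G), the vertex cover number of G. -/

import Mathlib

open SimpleGraph

variable {V : Type*}

/-- Edge `e` is monitored by vertex `x` in `G`: some distance from `x` changes
when `e` is removed. -/
def monitors (G : SimpleGraph V) (x : V) (e : Sym2 V) : Prop :=
  ∃ y : V, G.edist x y ≠ (G.deleteEdges {e}).edist x y

/-- `M` is a distance-edge-monitoring set of `G`. -/
def IsDEMSet (G : SimpleGraph V) (M : Set V) : Prop :=
  ∀ e ∈ G.edgeSet, ∃ x ∈ M, monitors G x e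

/-- The distance-edge-monitoring number of `G`. -/
noncomputable def dem (G : SimpleGraph V) : ℕ :=
  sInf {n | ∃ M : Set V, M.ncard = n ∧ IsDEMSet G M}

/-- For `e = s(x, y)`, `d(x, y) = 1` in `G` but `x` and `y` are not adjacent in `G - e`. -/
theorem monitors_of_mem_edgeSet {G : SimpleGraph V} {e : Sym2 V} (he : e ∈ G.edgeSet) {x : V}
    (hx : x ∈ e) : monitors G x e := by
  obtain ⟨y, rfl⟩ := Sym2.mem_iff_exists.mp hx
  refine ⟨y, fun h ↦ ?_⟩
  rw [edist_eq_one_iff_adj.mpr he, eq_comm, edist_eq_one_iff_adj, deleteEdges_adj] at h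
  exact h.2 rfl

theorem isDEMSet_of_forall_exists_mem {G : SimpleGraph V} {M : Set V}
    (hM : ∀ e ∈ G.edgeSet, ∃ v ∈ M, v ∈ e) : IsDEMSet G M := fun e he ↦
  let ⟨v, hvM, hve⟩ := hM e he
  ⟨v, hvM, monitors_of_mem_edgeSet he hve⟩

theorem dem_le_ncard {G : SimpleGraph V} {M : Set V} (hM : IsDEMSet G M) : dem G ≤ M.ncard :=
  Nat.sInf_le ⟨M, rfl, hM⟩

theorem stmt5_general (G : SimpleGraph V) :
    (∀ M : Set V, (∀ e ∈ G.edgeSet, ∃ v ∈ M, v ∈ e) → IsDEMSet G M) ∧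
    dem G ≤ sInf {n | ∃ M : Set V, M.ncard = n ∧ ∀ e ∈ G.edgeSet, ∃ v ∈ M, v ∈ e} := by
  refine ⟨fun _ ↦ isDEMSet_of_forall_exists_mem, ?_⟩
  have univ_covers : ∀ e ∈ G.edgeSet, ∃ v ∈ Set.univ, v ∈ e := fun e _ ↦
    e.inductionOn fun a b ↦ ⟨a, trivial, Sym2.mem_mk_left a b⟩
  exact le_csInf ⟨_, Set.univ, rfl, univ_covers⟩ fun _ ⟨_, hcard, hM⟩ ↦
    hcard ▸ dem_le_ncard (isDEMSet_of_forall_exists_mem hM)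

theorem stmt5 [Fintype V] (G : SimpleGraph V) (hG : G.Connected) :
    (∀ M : Set V, (∀ e ∈ G.edgeSet, ∃ v ∈ M, v ∈ e) → IsDEMSet G M) ∧
    dem G ≤ sInf {n | ∃ M : Set V, M.ncard = n ∧ ∀ e ∈ G.edgeSet, ∃ v ∈ M, v ∈ e} :=
  stmt5_general G
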